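/- Let n ≥ 3 and 0 < s < n−2. There exists a constant C = C(n, s) > 0 such that for every y ∈ ℝⁿ, one has ∫_{ℝⁿ} ⟨x⟩^{−s−2} |y−x|^{−(n−2)} dx ≤ C ⟨y⟩^{−s}. -/

import Mathlib

open Real MeasureTheory

/-- `⟨x⟩ := (1 + |x|²)^{1/2}`. -/
noncomputable def jap {n : ℕ} (x : EuclideanSpace ℝ (Fin n)) : ℝ :=
  Real.sqrt (1 + ‖x‖ ^ 2)

namespace Stmt14Aux

open Metric Set Module

lemma one_le_jap {n : ℕ} (x : EuclideanSpace ℝ (Fin n)) : 1 ≤ jap x := by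
  have h : Real.sqrt 1 ≤ Real.sqrt (1 + ‖x‖^2) := Real.sqrt_le_sqrt (by nlinarith [sq_nonneg ‖x‖])
  rw [Real.sqrt_one] at h; exact h

lemma jap_pos {n : ℕ} (x : EuclideanSpace ℝ (Fin n)) : 0 < jap x :=
  lt_of_lt_of_le one_pos (one_le_jap x)

lemma norm_le_jap {n : ℕ} (x : EuclideanSpace ℝ (Fin n)) : ‖x‖ ≤ jap x := by
  have h : Real.sqrt (‖x‖^2) ≤ Real.sqrt (1 + ‖x‖^2) := Real.sqrt_le_sqrt (by nlinarith)
  rw [Real.sqrt_sq (norm_nonneg x)] at h; exact h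

lemma jap_lip {n : ℕ} (x y : EuclideanSpace ℝ (Fin n)) : jap y ≤ jap x + ‖x - y‖ := by
  have h1 : ‖y‖ ≤ ‖x‖ + ‖x - y‖ := by
    have := norm_sub_le x (x - y); simpa using this.trans_eq (by ring_nf)
  have hx := norm_le_jap x
  have hj := jap_pos x
  have hsq : jap x ^ 2 = 1 + ‖x‖^2 := Real.sq_sqrt (by positivity)
  have h2 : (1 + ‖y‖^2) ≤ (jap x + ‖x - y‖)^2 := by
    nlinarith [norm_nonneg (x - y), norm_nonneg x, norm_nonneg y]
  calc jap y = Real.sqrt (1 + ‖y‖^2) := rfl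
    _ ≤ Real.sqrt ((jap x + ‖x - y‖)^2) := Real.sqrt_le_sqrt h2
    _ = jap x + ‖x - y‖ := Real.sqrt_sq (by nlinarith [norm_nonneg (x - y)])

lemma measurable_jap {n : ℕ} : Measurable (jap (n := n)) := by
  unfold jap; fun_prop

lemma integrableOn_rpow_cball {n : ℕ} {p : ℝ} (hp : 0 < p) (hpn : p < (n : ℝ)) :
    IntegrableOn (fun z : EuclideanSpace ℝ (Fin n) => ‖z‖ ^ (-p))
      (Metric.closedBall 0 1) volume := by
  set E := EuclideanSpace ℝ (Fin n)
  have hmeas : Measurable (fun z : E => ‖z‖ ^ (-p)) := by fun_prop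
  have h_nn : ∀ z : E, 0 ≤ ‖z‖ ^ (-p) := fun z => Real.rpow_nonneg (norm_nonneg _) _
  refine ⟨hmeas.aestronglyMeasurable, ?_⟩
  have hkey : (∫⁻ a in Metric.closedBall (0:E) 1, ‖(‖a‖ ^ (-p))‖ₑ)
      = ∫⁻ a in Metric.closedBall (0:E) 1, ENNReal.ofReal (‖a‖ ^ (-p)) :=
    lintegral_enorm_of_nonneg fun a => h_nn a
  rw [HasFiniteIntegral, hkey,
    lintegral_eq_lintegral_meas_le _ (ae_of_all _ h_nn) hmeas.aemeasurable]
  have hfle : ∀ t : ℝ, (volume.restrict (Metric.closedBall (0:E) 1)) {a : E | t ≤ ‖a‖ ^ (-p)}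
      ≤ volume (Metric.closedBall (0:E) 1) := fun t => by
    rw [Measure.restrict_apply' measurableSet_closedBall]
    exact measure_mono inter_subset_right
  have hsub : ∀ t : ℝ, 0 < t →
      {a : E | t ≤ ‖a‖ ^ (-p)} ⊆ Metric.closedBall 0 (t ^ (-p)⁻¹) := by
    intro t ht a ha
    simp only [Set.mem_setOf_eq] at ha
    rcases eq_or_ne a 0 with rfl | h0
    · exfalso
      rw [norm_zero, Real.zero_rpow (by linarith : -p ≠ 0)] at ha
      linarith
    · have hna : 0 < ‖a‖ := norm_pos_iff.2 h0
      rw [Metric.mem_closedBall, dist_zero_right]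
      exact (Real.le_rpow_inv_iff_of_neg hna ht (by linarith : -p < 0)).2 ha
  calc
    ∫⁻ t in Ioi 0, (volume.restrict (Metric.closedBall (0:E) 1)) {a : E | t ≤ ‖a‖ ^ (-p)}
        ≤ ∫⁻ t in Ioc 0 1 ∪ Ioi 1,
            (volume.restrict (Metric.closedBall (0:E) 1)) {a : E | t ≤ ‖a‖ ^ (-p)} :=
      lintegral_mono_set Ioi_subset_Ioc_union_Ioi
    _ ≤ (∫⁻ t in Ioc 0 1, (volume.restrict (Metric.closedBall (0:E) 1)) {a : E | t ≤ ‖a‖ ^ (-p)})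
        + ∫⁻ t in Ioi 1, (volume.restrict (Metric.closedBall (0:E) 1)) {a : E | t ≤ ‖a‖ ^ (-p)} :=
      lintegral_union_le _ _ _
    _ < ⊤ := ENNReal.add_lt_top.2 ⟨?_, ?_⟩
  · calc (∫⁻ t in Ioc (0:ℝ) 1,
          (volume.restrict (Metric.closedBall (0:E) 1)) {a : E | t ≤ ‖a‖ ^ (-p)})
        ≤ ∫⁻ _ in Ioc (0:ℝ) 1, volume (Metric.closedBall (0:E) 1) :=
          setLIntegral_mono' measurableSet_Ioc fun t _ => hfle t
      _ = volume (Metric.closedBall (0:E) 1) * volume (Ioc (0:ℝ) 1) := setLIntegral_const _ _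
      _ < ⊤ := by
          apply ENNReal.mul_lt_top measure_closedBall_lt_top
          simp [Real.volume_Ioc]
  · have hbound : ∀ t ∈ Ioi (1:ℝ),
        (volume.restrict (Metric.closedBall (0:E) 1)) {a : E | t ≤ ‖a‖ ^ (-p)} ≤
        ENNReal.ofReal (t ^ ((-p)⁻¹ * (finrank ℝ E : ℝ))) * volume (Metric.ball (0:E) 1) := by
      intro t ht
      have ht0 : (0:ℝ) < t := lt_trans one_pos ht
      have h1 : (volume.restrict (Metric.closedBall (0:E) 1)) {a : E | t ≤ ‖a‖ ^ (-p)}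
          ≤ volume (Metric.closedBall (0:E) (t ^ (-p)⁻¹)) := by
        rw [Measure.restrict_apply' measurableSet_closedBall]
        exact measure_mono ((inter_subset_left).trans (hsub t ht0))
      have h2 : volume (Metric.closedBall (0:E) (t ^ (-p)⁻¹))
          = ENNReal.ofReal ((t ^ (-p)⁻¹) ^ finrank ℝ E) * volume (Metric.ball (0:E) 1) :=
        Measure.addHaar_closedBall _ _ (Real.rpow_nonneg ht0.le _)
      rw [h2] at h1
      refine h1.trans (le_of_eq ?_)
      congr 1
      rw [← Real.rpow_natCast (t ^ (-p)⁻¹) (finrank ℝ E), ← Real.rpow_mul ht0.le]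
    calc (∫⁻ t in Ioi (1:ℝ),
          (volume.restrict (Metric.closedBall (0:E) 1)) {a : E | t ≤ ‖a‖ ^ (-p)})
        ≤ ∫⁻ t in Ioi (1:ℝ),
            ENNReal.ofReal (t ^ ((-p)⁻¹ * (finrank ℝ E : ℝ))) * volume (Metric.ball (0:E) 1) :=
          setLIntegral_mono' measurableSet_Ioi hbound
      _ = (∫⁻ t in Ioi (1:ℝ), ENNReal.ofReal (t ^ ((-p)⁻¹ * (finrank ℝ E : ℝ))))
            * volume (Metric.ball (0:E) 1) := by
          rw [lintegral_mul_const' _ _ measure_ball_lt_top.ne]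
      _ < ⊤ := by
          refine ENNReal.mul_lt_top ?_ measure_ball_lt_top
          refine IntegrableOn.setLIntegral_lt_top ?_
          apply integrableOn_Ioi_rpow_of_lt _ one_pos
          have hd : finrank ℝ E = n := finrank_euclideanSpace_fin
          rw [hd]
          have h3 : (-p)⁻¹ * (n:ℝ) = -((n:ℝ)/p) := by rw [inv_neg]; ring
          have h4 : 1 < (n:ℝ)/p := (one_lt_div hp).2 hpn
          rw [h3]
          linarith

lemma integrableOn_rpow_compl_cball {n : ℕ} {q : ℝ} (hq : (n : ℝ) < q) :
    IntegrableOn (fun z : EuclideanSpace ℝ (Fin n) => ‖z‖ ^ (-q))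
      (Metric.closedBall 0 1)ᶜ volume := by
  set E := EuclideanSpace ℝ (Fin n)
  have hd : (finrank ℝ E : ℝ) = n := by rw [finrank_euclideanSpace_fin]
  have hint : Integrable (fun z : E => (2:ℝ) ^ q * (1 + ‖z‖) ^ (-q)) volume :=
    (integrable_one_add_norm (by rw [hd]; exact hq)).const_mul _
  refine Integrable.mono' hint.restrict
    (by fun_prop : Measurable fun z : E => ‖z‖ ^ (-q)).aestronglyMeasurable ?_
  refine (ae_restrict_iff' measurableSet_closedBall.compl).2 (ae_of_all _ ?_)
  intro z hz
  have h1 : 1 < ‖z‖ := by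
    simpa [Metric.mem_closedBall, dist_zero_right] using hz
  have hz0 : (0:ℝ) < ‖z‖ := lt_trans one_pos h1
  rw [Real.norm_of_nonneg (Real.rpow_nonneg (norm_nonneg _) _)]
  have hstep : ((2:ℝ) * ‖z‖) ^ (-q) ≤ (1 + ‖z‖) ^ (-q) :=
    Real.rpow_le_rpow_of_nonpos (by linarith) (by linarith) (by linarith)
  have heq : ((2:ℝ) * ‖z‖) ^ (-q) = (2:ℝ) ^ (-q) * ‖z‖ ^ (-q) :=
    Real.mul_rpow (by norm_num) (norm_nonneg _)
  have h2q : (0:ℝ) < (2:ℝ) ^ q := Real.rpow_pos_of_pos two_pos _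
  have hq' : (2:ℝ) ^ (-q) = ((2:ℝ) ^ q)⁻¹ := Real.rpow_neg (by norm_num) q
  calc ‖z‖ ^ (-q) = (2:ℝ) ^ q * (((2:ℝ) ^ q)⁻¹ * ‖z‖ ^ (-q)) := by
        field_simp
    _ = (2:ℝ) ^ q * (((2:ℝ) * ‖z‖) ^ (-q)) := by rw [heq, hq']
    _ ≤ (2:ℝ) ^ q * (1 + ‖z‖) ^ (-q) := mul_le_mul_of_nonneg_left hstep h2q.le

lemma indicator_cball_scale {n : ℕ} {r p : ℝ} (hr : 0 < r) :
    (fun z : EuclideanSpace ℝ (Fin n) =>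
      Set.indicator (Metric.closedBall 0 r) (fun z => ‖z‖ ^ (-p)) z)
    = fun z : EuclideanSpace ℝ (Fin n) => r ^ (-p) *
        Set.indicator (Metric.closedBall 0 1) (fun u => ‖u‖ ^ (-p)) (r⁻¹ • z) := by
  funext z
  have hmem : (r⁻¹ • z ∈ Metric.closedBall (0 : EuclideanSpace ℝ (Fin n)) 1)
      ↔ z ∈ Metric.closedBall (0 : EuclideanSpace ℝ (Fin n)) r := by
    simp only [Metric.mem_closedBall, dist_zero_right, norm_smul, norm_inv,
      Real.norm_eq_abs, abs_of_pos hr]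
    rw [inv_mul_le_iff₀ hr, mul_one]
  by_cases hz : z ∈ Metric.closedBall (0 : EuclideanSpace ℝ (Fin n)) r
  · rw [Set.indicator_of_mem hz, Set.indicator_of_mem (hmem.2 hz)]
    have hnorm : ‖r⁻¹ • z‖ = r⁻¹ * ‖z‖ := by
      rw [norm_smul, norm_inv, Real.norm_eq_abs, abs_of_pos hr]
    rw [hnorm, Real.mul_rpow (by positivity) (norm_nonneg _), Real.inv_rpow hr.le,
      ← mul_assoc, mul_inv_cancel₀ (by positivity : r ^ (-p) ≠ 0), one_mul]
  · rw [Set.indicator_of_notMem hz, Set.indicator_of_notMem (fun h => hz (hmem.1 h)), mul_zero]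

lemma indicator_compl_cball_scale {n : ℕ} {r q : ℝ} (hr : 0 < r) :
    (fun z : EuclideanSpace ℝ (Fin n) =>
      Set.indicator (Metric.closedBall 0 r)ᶜ (fun z => ‖z‖ ^ (-q)) z)
    = fun z : EuclideanSpace ℝ (Fin n) => r ^ (-q) *
        Set.indicator (Metric.closedBall 0 1)ᶜ (fun u => ‖u‖ ^ (-q)) (r⁻¹ • z) := by
  funext z
  have hmem : (r⁻¹ • z ∈ Metric.closedBall (0 : EuclideanSpace ℝ (Fin n)) 1)
      ↔ z ∈ Metric.closedBall (0 : EuclideanSpace ℝ (Fin n)) r := by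
    simp only [Metric.mem_closedBall, dist_zero_right, norm_smul, norm_inv,
      Real.norm_eq_abs, abs_of_pos hr]
    rw [inv_mul_le_iff₀ hr, mul_one]
  by_cases hz : z ∈ Metric.closedBall (0 : EuclideanSpace ℝ (Fin n)) r
  · rw [Set.indicator_of_notMem (by simpa using hz), Set.indicator_of_notMem
      (by simpa using hmem.2 hz), mul_zero]
  · rw [Set.indicator_of_mem (by simpa using hz), Set.indicator_of_mem
      (by simpa using fun h => hz (hmem.1 h))]
    have hnorm : ‖r⁻¹ • z‖ = r⁻¹ * ‖z‖ := by
      rw [norm_smul, norm_inv, Real.norm_eq_abs, abs_of_pos hr]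
    rw [hnorm, Real.mul_rpow (by positivity) (norm_nonneg _), Real.inv_rpow hr.le,
      ← mul_assoc, mul_inv_cancel₀ (by positivity : r ^ (-q) ≠ 0), one_mul]

lemma integral_indicator_cball_scale {n : ℕ} {r p : ℝ} (hr : 0 < r) :
    ∫ z : EuclideanSpace ℝ (Fin n),
      Set.indicator (Metric.closedBall 0 r) (fun z => ‖z‖ ^ (-p)) z
    = r ^ ((n:ℝ) - p) * ∫ z : EuclideanSpace ℝ (Fin n),
        Set.indicator (Metric.closedBall 0 1) (fun z => ‖z‖ ^ (-p)) z := by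
  rw [indicator_cball_scale hr, integral_const_mul,
    Measure.integral_comp_inv_smul_of_nonneg volume
      (fun u : EuclideanSpace ℝ (Fin n) =>
        Set.indicator (Metric.closedBall 0 1) (fun u => ‖u‖ ^ (-p)) u) hr.le,
    smul_eq_mul, ← mul_assoc, finrank_euclideanSpace_fin,
    ← Real.rpow_natCast r n, ← Real.rpow_add hr]
  ring_nf

lemma integral_indicator_compl_cball_scale {n : ℕ} {r q : ℝ} (hr : 0 < r) :
    ∫ z : EuclideanSpace ℝ (Fin n),
      Set.indicator (Metric.closedBall 0 r)ᶜ (fun z => ‖z‖ ^ (-q)) z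
    = r ^ ((n:ℝ) - q) * ∫ z : EuclideanSpace ℝ (Fin n),
        Set.indicator (Metric.closedBall 0 1)ᶜ (fun z => ‖z‖ ^ (-q)) z := by
  rw [indicator_compl_cball_scale hr, integral_const_mul,
    Measure.integral_comp_inv_smul_of_nonneg volume
      (fun u : EuclideanSpace ℝ (Fin n) =>
        Set.indicator (Metric.closedBall 0 1)ᶜ (fun u => ‖u‖ ^ (-q)) u) hr.le,
    smul_eq_mul, ← mul_assoc, finrank_euclideanSpace_fin,
    ← Real.rpow_natCast r n, ← Real.rpow_add hr]
  ring_nf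

lemma integrable_indicator_cball_scale {n : ℕ} {r p : ℝ} (hr : 0 < r) (hp : 0 < p)
    (hpn : p < (n:ℝ)) :
    Integrable (fun z : EuclideanSpace ℝ (Fin n) =>
      Set.indicator (Metric.closedBall 0 r) (fun z => ‖z‖ ^ (-p)) z) volume := by
  have base : Integrable (fun z : EuclideanSpace ℝ (Fin n) =>
      Set.indicator (Metric.closedBall 0 1) (fun z => ‖z‖ ^ (-p)) z) volume :=
    (integrableOn_rpow_cball hp hpn).integrable_indicator measurableSet_closedBall
  rw [indicator_cball_scale hr]
  exact (base.comp_smul (inv_ne_zero hr.ne')).const_mul _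

lemma integrable_indicator_compl_cball_scale {n : ℕ} {r q : ℝ} (hr : 0 < r) (hq : (n:ℝ) < q) :
    Integrable (fun z : EuclideanSpace ℝ (Fin n) =>
      Set.indicator (Metric.closedBall 0 r)ᶜ (fun z => ‖z‖ ^ (-q)) z) volume := by
  have base : Integrable (fun z : EuclideanSpace ℝ (Fin n) =>
      Set.indicator (Metric.closedBall 0 1)ᶜ (fun z => ‖z‖ ^ (-q)) z) volume :=
    (integrableOn_rpow_compl_cball hq).integrable_indicator measurableSet_closedBall.compl
  rw [indicator_compl_cball_scale hr]
  exact (base.comp_smul (inv_ne_zero hr.ne')).const_mul _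

end Stmt14Aux

open Stmt14Aux Metric Set Module

/-- Let `n ≥ 3` and `0 < s < n−2`. There exists `C = C(n, s) > 0` such that for every
`y ∈ ℝⁿ`, `∫_{ℝⁿ} ⟨x⟩^{−s−2} |y−x|^{−(n−2)} dx ≤ C ⟨y⟩^{−s}`. -/
theorem stmt14 (n : ℕ) (hn : 3 ≤ n) (s : ℝ) (hs0 : 0 < s) (hs1 : s < (n : ℝ) - 2) :
    ∃ C : ℝ, 0 < C ∧ ∀ y : EuclideanSpace ℝ (Fin n),
      ∫ x : EuclideanSpace ℝ (Fin n), jap x ^ (-s - 2) * ‖y - x‖ ^ (-((n : ℝ) - 2)) ≤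
        C * jap y ^ (-s) := by
  have hn3 : (3:ℝ) ≤ (n:ℝ) := by exact_mod_cast hn
  set E := EuclideanSpace ℝ (Fin n) with hEdef
  have hp1 : (0:ℝ) < (n:ℝ) - 2 := by linarith
  have hp1n : (n:ℝ) - 2 < (n:ℝ) := by linarith
  have hp2 : (0:ℝ) < s + 2 := by linarith
  have hp2n : s + 2 < (n:ℝ) := by linarith
  have hqn : (n:ℝ) < (n:ℝ) + s := by linarith
  set K1 : ℝ := ∫ z : E, Set.indicator (Metric.closedBall 0 1)
    (fun z => ‖z‖ ^ (-((n:ℝ) - 2))) z with hK1def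
  set K2 : ℝ := ∫ z : E, Set.indicator (Metric.closedBall 0 1)
    (fun z => ‖z‖ ^ (-(s + 2))) z with hK2def
  set K3 : ℝ := ∫ z : E, Set.indicator (Metric.closedBall 0 1)ᶜ
    (fun z => ‖z‖ ^ (-((n:ℝ) + s))) z with hK3def
  have hK1 : 0 ≤ K1 := integral_nonneg fun z =>
    Set.indicator_nonneg (fun a _ => Real.rpow_nonneg (norm_nonneg _) _) z
  have hK2 : 0 ≤ K2 := integral_nonneg fun z =>
    Set.indicator_nonneg (fun a _ => Real.rpow_nonneg (norm_nonneg _) _) z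
  have hK3 : 0 ≤ K3 := integral_nonneg fun z =>
    Set.indicator_nonneg (fun a _ => Real.rpow_nonneg (norm_nonneg _) _) z
  set c : ℝ := 2 ^ s * K1 + 2 ^ (2*(n:ℝ) - s - 4) * K2 + 2 ^ ((n:ℝ) - 2 - s) * K3 with hcdef
  have hc : 0 ≤ c := by
    have t1 : (0:ℝ) ≤ 2 ^ s * K1 :=
      mul_nonneg (Real.rpow_nonneg (by norm_num) _) hK1
    have t2 : (0:ℝ) ≤ 2 ^ (2*(n:ℝ) - s - 4) * K2 :=
      mul_nonneg (Real.rpow_nonneg (by norm_num) _) hK2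
    have t3 : (0:ℝ) ≤ 2 ^ ((n:ℝ) - 2 - s) * K3 :=
      mul_nonneg (Real.rpow_nonneg (by norm_num) _) hK3
    rw [hcdef]; linarith
  refine ⟨c + 1, by linarith, fun y => ?_⟩
  set R := jap y with hRdef
  have hR1 : 1 ≤ R := one_le_jap y
  have hR0 : 0 < R := by linarith
  have hrho : (0:ℝ) < R/2 := by linarith
  have h2R : (0:ℝ) < 2*R := by linarith
  -- the three dominating pieces
  set gA : E → ℝ := fun x =>
    Set.indicator (Metric.closedBall y (R/2)) (fun x => ‖y - x‖ ^ (-((n:ℝ) - 2))) x with hgAdef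
  set gB : E → ℝ := fun x =>
    Set.indicator (Metric.closedBall 0 (2*R)) (fun x => ‖x‖ ^ (-(s + 2))) x with hgBdef
  set gC : E → ℝ := fun x =>
    Set.indicator (Metric.closedBall 0 (2*R))ᶜ (fun x => ‖x‖ ^ (-((n:ℝ) + s))) x with hgCdef
  -- translation identity for gA
  have hAeq : gA = fun x : E =>
      Set.indicator (Metric.closedBall 0 (R/2)) (fun z => ‖z‖ ^ (-((n:ℝ) - 2))) (x - y) := by
    funext x
    simp only [hgAdef]
    by_cases hx : x ∈ Metric.closedBall y (R/2)
    · have hx' : x - y ∈ Metric.closedBall (0:E) (R/2) := by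
        rw [mem_closedBall_iff_norm] at hx ⊢
        simpa using hx
      rw [Set.indicator_of_mem hx, Set.indicator_of_mem hx', norm_sub_rev]
    · have hx' : x - y ∉ Metric.closedBall (0:E) (R/2) := by
        intro h
        apply hx
        rw [mem_closedBall_iff_norm] at h ⊢
        simpa using h
      rw [Set.indicator_of_notMem hx, Set.indicator_of_notMem hx']
  have intA : Integrable gA volume := by
    rw [hAeq]
    exact (integrable_indicator_cball_scale hrho hp1 hp1n).comp_sub_right y
  have intB : Integrable gB volume := integrable_indicator_cball_scale h2R hp2 hp2n
  have intC : Integrable gC volume := integrable_indicator_compl_cball_scale h2R hqn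
  have vA : ∫ x : E, gA x = (R/2) ^ ((n:ℝ) - ((n:ℝ) - 2)) * K1 := by
    rw [hAeq, integral_sub_right_eq_self (fun z : E =>
      Set.indicator (Metric.closedBall 0 (R/2)) (fun z => ‖z‖ ^ (-((n:ℝ) - 2))) z) y,
      integral_indicator_cball_scale hrho, hK1def]
  have vB : ∫ x : E, gB x = (2*R) ^ ((n:ℝ) - (s + 2)) * K2 := by
    simp only [hgBdef]
    rw [integral_indicator_cball_scale h2R, hK2def]
  have vC : ∫ x : E, gC x = (2*R) ^ ((n:ℝ) - ((n:ℝ) + s)) * K3 := by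
    simp only [hgCdef]
    rw [integral_indicator_compl_cball_scale h2R, hK3def]
  -- pointwise domination (off the null set {0})
  haveI : Nonempty (Fin n) := Fin.pos_iff_nonempty.mp (by omega)
  haveI : Nontrivial E := inferInstance
  have h0 : ∀ᵐ x : E ∂volume, x ≠ 0 := by
    have hsing : volume ({0} : Set E) = 0 := measure_singleton 0
    have hset : {x : E | ¬ x ≠ 0} = {0} := by ext a; simp
    rw [ae_iff, hset]; exact hsing
  have hae : ∀ᵐ x : E ∂volume, jap x ^ (-s - 2) * ‖y - x‖ ^ (-((n:ℝ) - 2)) ≤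
      (R/2) ^ (-s - 2) * gA x +
        ((R/2) ^ (-((n:ℝ) - 2)) * gB x + 2 ^ ((n:ℝ) - 2) * gC x) := by
    filter_upwards [h0] with x hx0
    have hgA0 : 0 ≤ gA x := Set.indicator_nonneg
      (fun a _ => Real.rpow_nonneg (norm_nonneg _) _) x
    have hgB0 : 0 ≤ gB x := Set.indicator_nonneg
      (fun a _ => Real.rpow_nonneg (norm_nonneg _) _) x
    have hgC0 : 0 ≤ gC x := Set.indicator_nonneg
      (fun a _ => Real.rpow_nonneg (norm_nonneg _) _) x
    have htB0 : 0 ≤ (R/2) ^ (-((n:ℝ) - 2)) * gB x :=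
      mul_nonneg (Real.rpow_nonneg hrho.le _) hgB0
    have htC0 : 0 ≤ 2 ^ ((n:ℝ) - 2) * gC x :=
      mul_nonneg (Real.rpow_nonneg (by norm_num) _) hgC0
    have htA0 : 0 ≤ (R/2) ^ (-s - 2) * gA x :=
      mul_nonneg (Real.rpow_nonneg hrho.le _) hgA0
    have hnx : 0 < ‖x‖ := norm_pos_iff.2 hx0
    have hjapx : jap x ^ (-s - 2) ≤ ‖x‖ ^ (-(s + 2)) := by
      have h := Real.rpow_le_rpow_of_nonpos hnx (norm_le_jap x) (show -s - 2 ≤ 0 by linarith)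
      rw [show (-(s + 2) : ℝ) = -s - 2 by ring]
      exact h
    by_cases hxA : x ∈ Metric.closedBall y (R/2)
    · -- region A
      have hgAx : gA x = ‖y - x‖ ^ (-((n:ℝ) - 2)) := by
        simp only [hgAdef]; exact Set.indicator_of_mem hxA _
      have hjap : R/2 ≤ jap x := by
        have hl := jap_lip x y
        have hxy : ‖x - y‖ ≤ R/2 := by rwa [mem_closedBall_iff_norm] at hxA
        rw [← hRdef] at hl
        linarith
      have h1 : jap x ^ (-s - 2) ≤ (R/2) ^ (-s - 2) :=
        Real.rpow_le_rpow_of_nonpos hrho hjap (by linarith)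
      have hmain : jap x ^ (-s - 2) * ‖y - x‖ ^ (-((n:ℝ) - 2)) ≤ (R/2) ^ (-s - 2) * gA x := by
        rw [hgAx]
        exact mul_le_mul_of_nonneg_right h1 (Real.rpow_nonneg (norm_nonneg _) _)
      linarith
    · by_cases hxB : x ∈ Metric.closedBall (0:E) (2*R)
      · -- region B
        have hgBx : gB x = ‖x‖ ^ (-(s + 2)) := by
          simp only [hgBdef]; exact Set.indicator_of_mem hxB _
        have hxy : R/2 < ‖x - y‖ := by
          by_contra h
          push_neg at h
          exact hxA (mem_closedBall_iff_norm.2 h)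
        have h2 : ‖y - x‖ ^ (-((n:ℝ) - 2)) ≤ (R/2) ^ (-((n:ℝ) - 2)) := by
          apply Real.rpow_le_rpow_of_nonpos hrho _ (by linarith)
          rw [norm_sub_rev]
          linarith
        have hmain : jap x ^ (-s - 2) * ‖y - x‖ ^ (-((n:ℝ) - 2)) ≤
            (R/2) ^ (-((n:ℝ) - 2)) * gB x := by
          rw [hgBx, mul_comm ((R/2) ^ (-((n:ℝ) - 2)))]
          exact mul_le_mul hjapx h2 (Real.rpow_nonneg (norm_nonneg _) _)
            (Real.rpow_nonneg (norm_nonneg _) _)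
        linarith
      · -- region C
        have hxC : x ∈ (Metric.closedBall (0:E) (2*R))ᶜ := hxB
        have hgCx : gC x = ‖x‖ ^ (-((n:ℝ) + s)) := by
          simp only [hgCdef]; exact Set.indicator_of_mem hxC _
        have h2Rx : 2*R < ‖x‖ := by
          by_contra h
          push_neg at h
          exact hxB (by rw [mem_closedBall_iff_norm]; simpa using h)
        have hny : ‖y‖ ≤ R := by rw [hRdef]; exact norm_le_jap y
        have hxy : ‖x‖/2 ≤ ‖x - y‖ := by
          have := norm_sub_norm_le x y
          linarith
        have h2 : ‖y - x‖ ^ (-((n:ℝ) - 2)) ≤ (‖x‖/2) ^ (-((n:ℝ) - 2)) := by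
          apply Real.rpow_le_rpow_of_nonpos (by linarith) _ (by linarith)
          rw [norm_sub_rev]
          exact hxy
        have h3 : jap x ^ (-s - 2) * ‖y - x‖ ^ (-((n:ℝ) - 2)) ≤
            ‖x‖ ^ (-(s + 2)) * (‖x‖/2) ^ (-((n:ℝ) - 2)) :=
          mul_le_mul hjapx h2 (Real.rpow_nonneg (norm_nonneg _) _)
            (Real.rpow_nonneg (norm_nonneg _) _)
        have h4 : ‖x‖ ^ (-(s + 2)) * (‖x‖/2) ^ (-((n:ℝ) - 2)) =
            2 ^ ((n:ℝ) - 2) * ‖x‖ ^ (-((n:ℝ) + s)) := by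
          rw [Real.div_rpow (norm_nonneg x) (by norm_num : (0:ℝ) ≤ 2),
            Real.rpow_neg (by norm_num : (0:ℝ) ≤ 2), div_eq_mul_inv, inv_inv, ← mul_assoc,
            ← Real.rpow_add hnx, show (-(s + 2) + -((n:ℝ) - 2)) = -((n:ℝ) + s) by ring,
            mul_comm]
        have hmain : jap x ^ (-s - 2) * ‖y - x‖ ^ (-((n:ℝ) - 2)) ≤
            2 ^ ((n:ℝ) - 2) * gC x := by
          rw [hgCx, ← h4]
          exact h3
        linarith
  -- integrate the domination
  have fnn : ∀ x : E, 0 ≤ jap x ^ (-s - 2) * ‖y - x‖ ^ (-((n:ℝ) - 2)) := fun x =>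
    mul_nonneg (Real.rpow_nonneg (Real.sqrt_nonneg _) _) (Real.rpow_nonneg (norm_nonneg _) _)
  have bigInt : Integrable (fun x : E => (R/2) ^ (-s - 2) * gA x +
      ((R/2) ^ (-((n:ℝ) - 2)) * gB x + 2 ^ ((n:ℝ) - 2) * gC x)) volume :=
    (intA.const_mul _).add ((intB.const_mul _).add (intC.const_mul _))
  -- rpow bookkeeping
  have hhalf : ∀ a : ℝ, (R/2) ^ a = 2 ^ (-a) * R ^ a := fun a => by
    rw [Real.div_rpow hR0.le (by norm_num : (0:ℝ) ≤ 2),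
      Real.rpow_neg (by norm_num : (0:ℝ) ≤ 2), div_eq_inv_mul]
  have hdouble : ∀ a : ℝ, (2*R) ^ a = 2 ^ a * R ^ a := fun a =>
    Real.mul_rpow (by norm_num) hR0.le
  have hRadd : ∀ a b : ℝ, R ^ a * R ^ b = R ^ (a + b) := fun a b =>
    (Real.rpow_add hR0 a b).symm
  have h2add : ∀ a b : ℝ, (2:ℝ) ^ a * 2 ^ b = 2 ^ (a + b) := fun a b =>
    (Real.rpow_add two_pos a b).symm
  have e1 : (R/2) ^ (-s - 2) * ((R/2) ^ ((n:ℝ) - ((n:ℝ) - 2)) * K1)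
      = 2 ^ s * K1 * R ^ (-s) := by
    rw [hhalf, hhalf]
    calc (2 ^ (-(-s - 2)) * R ^ (-s - 2)) * ((2 ^ (-((n:ℝ) - ((n:ℝ) - 2)))
          * R ^ ((n:ℝ) - ((n:ℝ) - 2))) * K1)
        = (2 ^ (-(-s - 2)) * 2 ^ (-((n:ℝ) - ((n:ℝ) - 2)))) *
            (R ^ (-s - 2) * R ^ ((n:ℝ) - ((n:ℝ) - 2))) * K1 := by ring
      _ = 2 ^ s * K1 * R ^ (-s) := by
          rw [h2add, hRadd, show (-(-s - 2) + -((n:ℝ) - ((n:ℝ) - 2))) = s by ring,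
            show (-s - 2 + ((n:ℝ) - ((n:ℝ) - 2))) = -s by ring]
          ring
  have e2 : (R/2) ^ (-((n:ℝ) - 2)) * ((2*R) ^ ((n:ℝ) - (s + 2)) * K2)
      = 2 ^ (2*(n:ℝ) - s - 4) * K2 * R ^ (-s) := by
    rw [hhalf, hdouble]
    calc (2 ^ (-(-((n:ℝ) - 2))) * R ^ (-((n:ℝ) - 2))) *
          ((2 ^ ((n:ℝ) - (s + 2)) * R ^ ((n:ℝ) - (s + 2))) * K2)
        = (2 ^ (-(-((n:ℝ) - 2))) * 2 ^ ((n:ℝ) - (s + 2))) *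
            (R ^ (-((n:ℝ) - 2)) * R ^ ((n:ℝ) - (s + 2))) * K2 := by ring
      _ = 2 ^ (2*(n:ℝ) - s - 4) * K2 * R ^ (-s) := by
          rw [h2add, hRadd, show (-(-((n:ℝ) - 2)) + ((n:ℝ) - (s + 2))) = 2*(n:ℝ) - s - 4 by ring,
            show (-((n:ℝ) - 2) + ((n:ℝ) - (s + 2))) = -s by ring]
          ring
  have e3 : 2 ^ ((n:ℝ) - 2) * ((2*R) ^ ((n:ℝ) - ((n:ℝ) + s)) * K3)
      = 2 ^ ((n:ℝ) - 2 - s) * K3 * R ^ (-s) := by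
    rw [hdouble]
    calc (2:ℝ) ^ ((n:ℝ) - 2) * ((2 ^ ((n:ℝ) - ((n:ℝ) + s)) * R ^ ((n:ℝ) - ((n:ℝ) + s))) * K3)
        = ((2:ℝ) ^ ((n:ℝ) - 2) * 2 ^ ((n:ℝ) - ((n:ℝ) + s))) * R ^ ((n:ℝ) - ((n:ℝ) + s)) * K3 := by
          ring
      _ = 2 ^ ((n:ℝ) - 2 - s) * K3 * R ^ (-s) := by
          rw [h2add, show (((n:ℝ) - 2) + ((n:ℝ) - ((n:ℝ) + s))) = (n:ℝ) - 2 - s by ring,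
            show ((n:ℝ) - ((n:ℝ) + s)) = -s by ring]
          ring
  calc ∫ x : E, jap x ^ (-s - 2) * ‖y - x‖ ^ (-((n:ℝ) - 2))
      ≤ ∫ x : E, ((R/2) ^ (-s - 2) * gA x +
          ((R/2) ^ (-((n:ℝ) - 2)) * gB x + 2 ^ ((n:ℝ) - 2) * gC x)) :=
        integral_mono_of_nonneg (ae_of_all _ fnn) bigInt hae
    _ = (R/2) ^ (-s - 2) * (∫ x : E, gA x) +
          ((R/2) ^ (-((n:ℝ) - 2)) * (∫ x : E, gB x) + 2 ^ ((n:ℝ) - 2) * (∫ x : E, gC x)) := by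
        have intBC : Integrable (fun x : E =>
            (R/2) ^ (-((n:ℝ) - 2)) * gB x + 2 ^ ((n:ℝ) - 2) * gC x) volume :=
          (intB.const_mul _).add (intC.const_mul _)
        rw [integral_add (intA.const_mul _) intBC,
          integral_add (intB.const_mul _) (intC.const_mul _),
          integral_const_mul, integral_const_mul, integral_const_mul]
    _ = c * R ^ (-s) := by
        rw [vA, vB, vC, e1, e2, e3, hcdef]
        ring
    _ ≤ (c + 1) * R ^ (-s) := by
        apply mul_le_mul_of_nonneg_right (by linarith) (Real.rpow_nonneg hR0.le _)
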